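/- arXiv:cs/0512065 — 6 statements merged into one kernel-verified Lean document; each statement's English description precedes it below -/
import Mathlib

section
/- Suppose S ⊆ ℕ is decidable and nonempty, with some fixed s ∈ S. Then totality many-one reduces to total correctness: there is a computable function f : Nat.Partrec.Code → Nat.Partrec.Code such that for every code g, (∀ x, (eval g x).Dom) ↔ ((∀ x, (eval (f g) x).Dom) ∧ (∀ x y, y ∈ eval (f g) x → y ∈ S)). -/
/-! Post-composing a generator `g` with the constant code `const s` keeps its domain and makes
every output equal to `s ∈ S`, so the composite is totally correct exactly when `g` is total. -/

namespace Nat.Partrec.Code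

theorem eval_const_comp (s : ℕ) (g : Code) (x : ℕ) :
    ((Code.const s).comp g).eval x = (g.eval x).map fun _ => s := by
  rw [← Part.bind_some_eq_map, ← funext (eval_const s)]
  rfl

theorem eval_const_comp_dom_iff (s : ℕ) (g : Code) (x : ℕ) :
    (((Code.const s).comp g).eval x).Dom ↔ (g.eval x).Dom := by
  rw [eval_const_comp, Part.map_Dom]

theorem eq_of_mem_eval_const_comp {s : ℕ} {g : Code} {x y : ℕ}
    (hy : y ∈ ((Code.const s).comp g).eval x) : y = s := by
  rw [eval_const_comp] at hy
  obtain ⟨_, -, rfl⟩ := Part.mem_map_iff _ |>.1 hy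
  rfl

theorem computable_const_comp (s : ℕ) : Computable fun g : Code => (Code.const s).comp g :=
  (primrec₂_comp.comp (_root_.Primrec.const _) _root_.Primrec.id).to_comp

end Nat.Partrec.Code

open Nat.Partrec.Code in
theorem tot_reduces_to_total_correctness_general (S : Set ℕ)
    (s : ℕ) (hs : s ∈ S) :
    ∃ f : Nat.Partrec.Code → Nat.Partrec.Code, Computable f ∧
      ∀ g : Nat.Partrec.Code,
        (∀ x, (g.eval x).Dom) ↔
          ((∀ x, ((f g).eval x).Dom) ∧ (∀ x y, y ∈ (f g).eval x → y ∈ S)) := by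
  refine ⟨(Nat.Partrec.Code.const s).comp, computable_const_comp s, fun g => ?_⟩
  simp only [eval_const_comp_dom_iff]
  exact ⟨fun hg => ⟨hg, fun x y hy => eq_of_mem_eval_const_comp hy ▸ hs⟩, And.left⟩

theorem tot_reduces_to_total_correctness (S : Set ℕ) (hS : ComputablePred (· ∈ S))
    (s : ℕ) (hs : s ∈ S) :
    ∃ f : Nat.Partrec.Code → Nat.Partrec.Code, Computable f ∧
      ∀ g : Nat.Partrec.Code,
        (∀ x, (g.eval x).Dom) ↔
          ((∀ x, ((f g).eval x).Dom) ∧ (∀ x y, y ∈ (f g).eval x → y ∈ S)) :=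
  tot_reduces_to_total_correctness_general S s hs
end

section
/- If a functional property ψ : Nat.Partrec.Code → Prop is captured by some language L, then ψ is Σ⁰₃: there exists a decidable relation R (ComputablePred on Nat.Partrec.Code × ℕ × ℕ × ℕ) such that for every code g, ψ g ↔ ∃ a : ℕ, ∀ b : ℕ, ∃ c : ℕ, R (g, a, b, c). -/
/-!
A property `ψ` captured by `L` holds of `g` exactly when some member of `L` computes the same
function as `g`: soundness gives one direction, completeness together with functionality the
other. The outer `∃` ranges over indices of members of `L`, a decidable condition. Equality of
`c.eval` and `g.eval` is `Π⁰₂`: for every input `n`, output `k` and step bound `s`, a halt of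
either code within `s` steps must be matched by a halt of the other within some `t` steps, and
this matching condition is primitive recursive because `evaln` is.
-/

open Nat.Partrec Nat.Partrec.Code Denumerable

theorem Denumerable.ofNat_surjective (α : Type*) [Denumerable α] :
    Function.Surjective (Denumerable.ofNat α) :=
  (Denumerable.eqv α).symm.surjective

namespace ComputablePred

variable {α β : Type*} [Primcodable α] [Primcodable β]

theorem comp {p : β → Prop} {f : α → β} (hp : ComputablePred p) (hf : Computable f) :
    ComputablePred fun a => p (f a) :=
  let ⟨_, hp⟩ := hp
  ⟨inferInstance, hp.comp hf⟩

protected theorem and {p q : α → Prop} (hp : ComputablePred p) (hq : ComputablePred q) :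
    ComputablePred fun a => p a ∧ q a := by
  obtain ⟨_, hp⟩ := hp
  obtain ⟨_, hq⟩ := hq
  exact ⟨inferInstance, (Primrec.and.to_comp.comp hp hq).of_eq fun _ => by simp⟩

end ComputablePred

theorem PrimrecPred.imp {α : Type*} [Primcodable α] {p q : α → Prop} (hp : PrimrecPred p)
    (hq : PrimrecPred q) : PrimrecPred fun a => p a → q a :=
  (hp.not.or hq).of_eq fun _ => imp_iff_not_or.symm

theorem iff_exists_mem_eq_of_captures {α β : Type*} {f : α → β} {ψ : α → Prop} {L : Set α}
    (hfunc : ∀ c c', f c = f c' → (ψ c ↔ ψ c')) (hsound : ∀ c ∈ L, ψ c)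
    (hcomplete : ∀ c, ψ c → ∃ c' ∈ L, f c' = f c) (g : α) :
    ψ g ↔ ∃ c ∈ L, f c = f g :=
  ⟨hcomplete g, fun ⟨c, hcL, hc⟩ => (hfunc c g hc).mp (hsound c hcL)⟩

namespace Nat.Partrec.Code

def EvalnAgree (c g : Code) (n k s t : ℕ) : Prop :=
  (k ∈ evaln s c n → k ∈ evaln t g n) ∧ (k ∈ evaln s g n → k ∈ evaln t c n)

theorem mem_eval_imp_mem_eval_iff_forall_exists_evaln (c g : Code) (n k : ℕ) :
    (k ∈ c.eval n → k ∈ g.eval n) ↔ ∀ s, ∃ t, k ∈ evaln s c n → k ∈ evaln t g n := by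
  constructor
  · intro h s
    by_cases hs : k ∈ evaln s c n
    · obtain ⟨t, ht⟩ := evaln_complete.mp (h (evaln_sound hs))
      exact ⟨t, fun _ => ht⟩
    · exact ⟨0, fun h => absurd h hs⟩
  · intro h hk
    obtain ⟨s, hs⟩ := evaln_complete.mp hk
    obtain ⟨t, ht⟩ := h s
    exact evaln_sound (ht hs)

theorem eval_eq_iff_forall_exists_evalnAgree (c g : Code) :
    c.eval = g.eval ↔ ∀ n k s, ∃ t, EvalnAgree c g n k s t := by
  have hext : c.eval = g.eval ↔
      ∀ n k, (k ∈ c.eval n → k ∈ g.eval n) ∧ (k ∈ g.eval n → k ∈ c.eval n) := by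
    simp only [← iff_iff_implies_and_implies]
    exact ⟨fun h _ _ => h ▸ Iff.rfl, PFun.ext⟩
  simp only [hext, forall_and, mem_eval_imp_mem_eval_iff_forall_exists_evaln]
  constructor
  · rintro ⟨hcg, hgc⟩ n k s
    obtain ⟨t₁, ht₁⟩ := hcg n k s
    obtain ⟨t₂, ht₂⟩ := hgc n k s
    exact ⟨max t₁ t₂, fun hc => evaln_mono (le_max_left _ _) (ht₁ hc),
      fun hg => evaln_mono (le_max_right _ _) (ht₂ hg)⟩
  · intro h
    exact ⟨fun n k s => (h n k s).imp fun _ => And.left,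
      fun n k s => (h n k s).imp fun _ => And.right⟩

section Primrec

variable {α : Type*} [Primcodable α] {c g : α → Code} {n k s t : α → ℕ}

theorem primrecPred_mem_evaln (hs : Primrec s) (hc : Primrec c) (hn : Primrec n)
    (hk : Primrec k) : PrimrecPred fun a => k a ∈ evaln (s a) (c a) (n a) :=
  (Primrec.eq.comp (primrec_evaln.comp ((hs.pair hc).pair hn)) (Primrec.option_some.comp hk)).of_eq
    fun _ => Option.mem_def.symm

theorem primrecPred_evalnAgree (hc : Primrec c) (hg : Primrec g) (hn : Primrec n)
    (hk : Primrec k) (hs : Primrec s) (ht : Primrec t) :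
    PrimrecPred fun a => EvalnAgree (c a) (g a) (n a) (k a) (s a) (t a) :=
  ((primrecPred_mem_evaln hs hc hn hk).imp (primrecPred_mem_evaln ht hg hn hk)).and
    ((primrecPred_mem_evaln hs hg hn hk).imp (primrecPred_mem_evaln ht hc hn hk))

end Primrec

end Nat.Partrec.Code

theorem captured_functional_sigma03 (ψ : Nat.Partrec.Code → Prop)
    (hfunc : ∀ c c' : Nat.Partrec.Code, c.eval = c'.eval → (ψ c ↔ ψ c'))
    (L : Set Nat.Partrec.Code) (hL : ComputablePred (· ∈ L))
    (hsound : ∀ c ∈ L, ψ c)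
    (hcomplete : ∀ c : Nat.Partrec.Code, ψ c → ∃ c' ∈ L, c'.eval = c.eval) :
    ∃ R : Nat.Partrec.Code × ℕ × ℕ × ℕ → Prop, ComputablePred R ∧
      ∀ g : Nat.Partrec.Code, ψ g ↔ ∃ a : ℕ, ∀ b : ℕ, ∃ c : ℕ, R (g, a, b, c) := by
  refine ⟨fun x => ofNat Code x.2.1 ∈ L ∧ EvalnAgree (ofNat Code x.2.1) x.1
      (ofNat (ℕ × ℕ × ℕ) x.2.2.1).1 (ofNat (ℕ × ℕ × ℕ) x.2.2.1).2.1 (ofNat (ℕ × ℕ × ℕ) x.2.2.1).2.2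
      x.2.2.2, ?_, fun g => ?_⟩
  · have hcode : Primrec fun x : Code × ℕ × ℕ × ℕ => ofNat Code x.2.1 :=
      (Primrec.ofNat Code).comp (Primrec.fst.comp Primrec.snd)
    have hquery : Primrec fun x : Code × ℕ × ℕ × ℕ => ofNat (ℕ × ℕ × ℕ) x.2.2.1 :=
      (Primrec.ofNat _).comp (Primrec.fst.comp (Primrec.snd.comp Primrec.snd))
    exact (hL.comp hcode.to_comp).and (primrecPred_evalnAgree hcode Primrec.fst
      (Primrec.fst.comp hquery) (Primrec.fst.comp (Primrec.snd.comp hquery))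
      (Primrec.snd.comp (Primrec.snd.comp hquery))
      (Primrec.snd.comp (Primrec.snd.comp Primrec.snd))).computablePred
  · have forall_query (P : ℕ → ℕ → ℕ → Prop) :
        (∀ n k s, P n k s) ↔ ∀ b, P (ofNat (ℕ × ℕ × ℕ) b).1 (ofNat (ℕ × ℕ × ℕ) b).2.1
          (ofNat (ℕ × ℕ × ℕ) b).2.2 :=
      ⟨fun h b => h _ _ _, fun h n k s => by simpa using h (Encodable.encode (n, k, s))⟩
    rw [iff_exists_mem_eq_of_captures hfunc hsound hcomplete g,
      (Denumerable.ofNat_surjective Code).exists]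
    simp only [eval_eq_iff_forall_exists_evalnAgree, forall_query, exists_and_left,
      forall_and_left]
end

section
/- There is no language capturing the total computable functions: there is no set L of codes with ComputablePred (· ∈ L) such that (i) every c ∈ L halts on every input (∀ c ∈ L, ∀ x, (eval c x).Dom), and (ii) for every code c that halts on every input there is c' ∈ L with eval c' = eval c. -/
open Nat.Partrec (Code)
open Nat.Partrec.Code

theorem no_language_captures_tot :
    ¬ ∃ L : Set Nat.Partrec.Code, ComputablePred (· ∈ L) ∧
        (∀ c ∈ L, ∀ x, (c.eval x).Dom) ∧
        (∀ c : Nat.Partrec.Code, (∀ x, (c.eval x).Dom) →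
          ∃ c' ∈ L, c'.eval = c.eval) := by
  rintro ⟨L, ⟨hD, hcomp⟩, htot, hcap⟩
  -- L is nonempty: the identity code is total
  obtain ⟨c0, hc0L, -⟩ := hcap Code.id (fun x => by simp [Nat.Partrec.Code.eval_id])
  -- enumeration of L
  set g : ℕ → Code := fun n => if Denumerable.ofNat Code n ∈ L then Denumerable.ofNat Code n else c0 with hg
  have hgL : ∀ n, g n ∈ L := by
    intro n; by_cases h : Denumerable.ofNat Code n ∈ L <;> simp [hg, h, hc0L]
  have hgcomp : Computable g := by
    have : Computable fun n => decide (Denumerable.ofNat Code n ∈ L) :=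
      hcomp.comp (Computable.ofNat _)
    have := Computable.cond this (Computable.ofNat Code) (Computable.const c0)
    refine this.of_eq fun n => ?_
    by_cases h : Denumerable.ofNat Code n ∈ L <;> simp [hg, h]
  -- diagonal function
  have hf' : Partrec fun n => ((g n).eval n).map Nat.succ :=
    (eval_part.comp hgcomp Computable.id).map (Computable.succ.comp Computable.snd).to₂
  have hdom : ∀ n, (((g n).eval n).map Nat.succ).Dom := fun n => htot _ (hgL n) n
  set F : ℕ → ℕ := fun n => (((g n).eval n).map Nat.succ).get (hdom n) with hF
  have hFcomp : Computable F := by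
    refine hf'.of_eq fun n => ?_
    exact (Part.some_get (hdom n)).symm
  obtain ⟨c, hc⟩ := exists_code.1 (Partrec.nat_iff.1 hFcomp)
  have hctot : ∀ x, (c.eval x).Dom := by intro x; rw [hc]; trivial
  obtain ⟨c', hc'L, hc'⟩ := hcap c hctot
  -- c' = g (encode c')
  set m := Encodable.encode c' with hm
  have hgm : g m = c' := by simp [hg, hm, hc'L]
  have : F m = F m + 1 := by
    conv_lhs => rw [hF]
    have h1 : ((g m).eval m).map Nat.succ = Part.some (F m + 1) := by
      rw [hgm, hc', hc]
      simp [Part.eq_some_iff]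
    rw [Part.get_eq_iff_mem, h1]
    simp
  omega
end

section
/- Suppose S ⊆ ℕ contains at least two distinct safe instances s₁ ≠ s₂ with s₁ ∈ S and s₂ ∈ S. Then there is no language capturing the total-correctness property ψ(g) := ∀ x, ∃ y, y ∈ eval g x ∧ y ∈ S ('g halts on every input and outputs a safe instance'): there is no set L of codes with ComputablePred (· ∈ L) such that every c ∈ L satisfies ψ and every code c with ψ c has some c' ∈ L with eval c' = eval c. -/
/-!
Diagonalization. Fix a map `σ` without fixed points that sends everything to `s₁` or `s₂`. From a
decision procedure for `L` one builds a code `d` that, on input `⌜c⌝`, runs `σ ∘ c` on `⌜c⌝` if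
`c ∈ L` and outputs `s₁` otherwise. Soundness of `L` makes `d` total with values in `S`, so
completeness gives `c ∈ L` computing the same function as `d`. If `y` is the output of `c` on
`⌜c⌝`, that of `d` is `σ y`, so `σ y = y`.
-/

open Nat.Partrec Encodable

theorem exists_primrec_ne_self_and_eq_or_eq {a b : ℕ} (hab : a ≠ b) :
    ∃ σ : ℕ → ℕ, Primrec σ ∧ ∀ y, σ y ≠ y ∧ (σ y = a ∨ σ y = b) := by
  refine ⟨fun y => if y = b then a else b,
    Primrec.ite (Primrec.eq.comp Primrec.id (Primrec.const b)) (Primrec.const a) (Primrec.const b),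
    fun y => ?_⟩
  by_cases hy : y = b
  · simp [hy, hab]
  · simp [hy, Ne.symm hy]

open Classical in
theorem Nat.Partrec.Code.exists_code_eval_encode_eq_ite {L : Set Code}
    (hL : ComputablePred (· ∈ L)) {σ : ℕ → ℕ} (hσ : Computable σ) (a : ℕ) :
    ∃ d : Code, ∀ c : Code,
      d.eval (encode c) = if c ∈ L then (c.eval (encode c)).map σ else Part.some a := by
  obtain ⟨f, hf, hfL⟩ := ComputablePred.computable_iff.1 hL
  have hdiag : Partrec fun x : ℕ =>
      cond (f (Denumerable.ofNat Code x))
        ((Code.eval (Denumerable.ofNat Code x) x).map σ) (Part.some a) :=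
    Partrec.cond (hf.comp (Computable.ofNat Code))
      (Partrec.map (Code.eval_part.comp (Computable.ofNat Code) Computable.id)
        (hσ.comp Computable.snd).to₂)
      (Partrec.const' _)
  obtain ⟨d, hd⟩ := Code.exists_code.1 (Partrec.nat_iff.1 hdiag)
  refine ⟨d, fun c => ?_⟩
  have hc : c ∈ L ↔ f c = true := Iff.of_eq (congrFun hfL c)
  simp only [hd, Denumerable.ofNat_encode]
  cases hfc : f c <;> simp [hc, hfc]

theorem no_language_captures_total_correctness (S : Set ℕ) (s₁ s₂ : ℕ)
    (hs₁ : s₁ ∈ S) (hs₂ : s₂ ∈ S) (hne : s₁ ≠ s₂) :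
    ¬ ∃ L : Set Nat.Partrec.Code, ComputablePred (· ∈ L) ∧
        (∀ c ∈ L, ∀ x, ∃ y, y ∈ c.eval x ∧ y ∈ S) ∧
        (∀ c : Nat.Partrec.Code, (∀ x, ∃ y, y ∈ c.eval x ∧ y ∈ S) →
          ∃ c' ∈ L, c'.eval = c.eval) := by
  rintro ⟨L, hL, hsound, hcomplete⟩
  obtain ⟨σ, hσ, hσpair⟩ := exists_primrec_ne_self_and_eq_or_eq hne
  have hσS : ∀ y, σ y ∈ S := fun y => (hσpair y).2.elim (· ▸ hs₁) (· ▸ hs₂)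
  obtain ⟨d, hd⟩ := Code.exists_code_eval_encode_eq_ite hL hσ.to_comp s₁
  have hdS : ∀ x, ∃ y, y ∈ d.eval x ∧ y ∈ S := by
    intro x
    rw [← Denumerable.encode_ofNat (α := Code) x, hd]
    split_ifs with hx
    · obtain ⟨y, hy, -⟩ := hsound _ hx (encode (Denumerable.ofNat Code x))
      exact ⟨σ y, Part.mem_map σ hy, hσS y⟩
    · exact ⟨s₁, Part.mem_some s₁, hs₁⟩
  obtain ⟨c, hcL, hcd⟩ := hcomplete d hdS
  obtain ⟨y, hy, -⟩ := hsound c hcL (encode c)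
  have hσy : σ y ∈ c.eval (encode c) := by
    rw [hcd, hd, if_pos hcL]
    exact Part.mem_map σ hy
  exact (hσpair y).1 (Part.mem_unique hσy hy)
end

section
/- There is a language capturing the property 'halts on at most finitely many inputs': there exists a set L of codes with ComputablePred (· ∈ L) such that (i) every c ∈ L has finite domain ({x | (c.eval x).Dom}.Finite), and (ii) every code c whose domain {x | (c.eval x).Dom} is finite has some c' ∈ L with eval c' = eval c. -/
/-!
Take for `L` the codes of finite tables: a fixed code evaluates a list of input/output pairs by
lookup, and its curried instances `curry c n` (with `n` read as the list `ofNat n`) form `L`.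
A table has finitely many keys, and every partial function with finite domain is the lookup of the
table of its graph. Membership is decidable because `n ≤ encode (curry c n)`, so `c' ∈ L` can be
tested by trying the finitely many `n ≤ encode c'`.
-/

open Nat.Partrec (Code)
open Nat.Partrec.Code Encodable

namespace List

variable {α β : Type*} [BEq α] [LawfulBEq α]

theorem lookup_graph_eq_none (f : α → β) {a : α} {as : List α} (h : a ∉ as) :
    (as.map fun x => (x, f x)).lookup a = none := by
  induction as with grind

theorem finite_setOf_lookup_isSome (l : List (α × β)) : {a | (l.lookup a).isSome}.Finite := by
  refine (l.map Prod.fst).finite_toSet.subset fun a ha => ?_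
  induction l with grind

end List

theorem Part.exists_list_lookup_eq_of_finite_dom {f : ℕ →. ℕ} (hf : {x | (f x).Dom}.Finite) :
    ∃ l : List (ℕ × ℕ), ∀ x, (l.lookup x : Part ℕ) = f x := by
  classical
  refine ⟨hf.toFinset.toList.map fun x => (x, (f x).toOption.getD 0), fun x => ?_⟩
  by_cases hx : (f x).Dom
  · rw [List.lookup_graph _ (by simpa using hx)]
    simp [Part.toOption, hx]
  · rw [List.lookup_graph_eq_none _ (by simpa using hx), Part.eq_none_iff'.2 hx]
    rfl

theorem Primrec.primrecPred_mem_range_of_le_encode {α : Type*} [Primcodable α] [DecidableEq α]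
    {f : ℕ → α} (hf : Primrec f) (hle : ∀ n, n ≤ encode (f n)) :
    PrimrecPred (· ∈ Set.range f) := by
  have hbounded : PrimrecPred fun a : α => ∃ n ∈ List.range (encode a + 1), f n = a :=
    (PrimrecRel.exists_mem_list (Primrec.eq.comp₂ (hf.comp₂ Primrec₂.left) Primrec₂.right)).comp
      (Primrec.list_range.comp (Primrec.succ.comp Primrec.encode)) Primrec.id
  refine hbounded.of_eq fun a => ⟨fun ⟨n, _, hn⟩ => ⟨n, hn⟩, ?_⟩
  rintro ⟨n, rfl⟩
  exact ⟨n, List.mem_range.2 (Nat.lt_succ_of_le (hle n)), rfl⟩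

namespace Nat.Partrec.Code

theorem le_encode_const (n : ℕ) : n ≤ encode (Code.const n) := by
  induction n with
  | zero => exact Nat.zero_le _
  | succ n ih => exact ih.trans_lt (encode_lt_comp Code.succ (Code.const n)).2

theorem le_encode_curry (c : Code) (n : ℕ) : n ≤ encode (curry c n) :=
  le_of_lt <| calc n ≤ encode (Code.const n) := le_encode_const n
    _ < encode (pair (Code.const n) Code.id) := (encode_lt_pair _ _).1
    _ < encode (curry c n) := (encode_lt_comp _ _).2

theorem exists_code_eval_curry_eq_lookup :
    ∃ c : Code, ∀ n x, (curry c n).eval x = (Denumerable.ofNat (List (ℕ × ℕ)) n).lookup x := by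
  have hlookup : Primrec fun p : ℕ × ℕ => (Denumerable.ofNat (List (ℕ × ℕ)) p.1).lookup p.2 :=
    Primrec.listLookup.comp Primrec.snd ((Primrec.ofNat _).comp Primrec.fst)
  have hpartrec : Partrec fun m : ℕ =>
      ((Denumerable.ofNat (List (ℕ × ℕ)) m.unpair.1).lookup m.unpair.2 : Part ℕ) :=
    Computable.ofOption (hlookup.comp Primrec.unpair).to_comp
  obtain ⟨c, hc⟩ := exists_code.1 (Partrec.nat_iff.1 hpartrec)
  exact ⟨c, fun n x => by simp [eval_curry, hc]⟩

end Nat.Partrec.Code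

theorem language_captures_finite_domain :
    ∃ L : Set Nat.Partrec.Code, ComputablePred (· ∈ L) ∧
      (∀ c ∈ L, {x : ℕ | (c.eval x).Dom}.Finite) ∧
      (∀ c : Nat.Partrec.Code, {x : ℕ | (c.eval x).Dom}.Finite →
        ∃ c' ∈ L, c'.eval = c.eval) := by
  classical
  obtain ⟨c, hc⟩ := exists_code_eval_curry_eq_lookup
  refine ⟨Set.range (curry c), ?_, ?_, ?_⟩
  · exact (Primrec.primrecPred_mem_range_of_le_encode
      (primrec₂_curry.comp (Primrec.const c) Primrec.id) (le_encode_curry c)).computablePred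
  · rintro _ ⟨n, rfl⟩
    simpa only [hc, Part.ofOption_dom] using List.finite_setOf_lookup_isSome _
  · intro c' hfinite
    obtain ⟨l, hl⟩ := Part.exists_list_lookup_eq_of_finite_dom hfinite
    exact ⟨curry c (encode l), ⟨_, rfl⟩,
      funext fun x => by rw [hc, Denumerable.ofNat_encode, hl]⟩
end

section
/- If S ⊆ ℕ is decidable (ComputablePred (· ∈ S)) and nonempty, then there is a language capturing the safe-generator property: there exists a set L of codes with ComputablePred (· ∈ L) such that (i) every c ∈ L is a safe generator (∀ x y, y ∈ c.eval x → y ∈ S), and (ii) every code c that is a safe generator for S has some c' ∈ L with eval c' = eval c. -/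
/-!
Fix a computable retraction `r` of `ℕ` onto `S` (the identity on `S`, the constant `s` off it)
and a code `f` for it. The language is the set of codes `f.comp c`: each of them only outputs
values of `r`, and for a safe generator `c` postcomposing with `r` changes nothing. Membership is
decidable because `c = f.comp g` forces `encode g < encode c`, so it suffices to search among
the finitely many codes below `c`.
-/

open Nat.Partrec

theorem Part.map_eq_self_of_forall_mem {α : Type*} {f : α → α} {o : Part α}
    (h : ∀ a ∈ o, f a = a) : o.map f = o :=
  Part.ext fun a => ⟨fun ha => by
    obtain ⟨b, hb, rfl⟩ := (Part.mem_map_iff f).1 ha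
    rwa [h b hb], fun ha => (Part.mem_map_iff f).2 ⟨a, ha, h a ha⟩⟩

theorem ComputablePred.exists_computable_retraction {S : Set ℕ} (hS : ComputablePred (· ∈ S))
    {s : ℕ} (hs : s ∈ S) :
    ∃ r : ℕ → ℕ, Computable r ∧ (∀ y, r y ∈ S) ∧ ∀ y ∈ S, r y = y := by
  classical
  refine ⟨fun y => if y ∈ S then y else s, hS.ite Computable.id (Computable.const s), ?_, ?_⟩
  · intro y
    dsimp only
    split_ifs with hy
    exacts [hy, hs]
  · intro y hy
    simp [hy]

namespace Nat.Partrec.Code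

theorem mem_range_comp_iff (f c : Code) :
    c ∈ Set.range f.comp ↔ ∃ n < Encodable.encode c, f.comp (Denumerable.ofNat Code n) = c := by
  constructor
  · rintro ⟨g, rfl⟩
    exact ⟨Encodable.encode g, (encode_lt_comp f g).2, by simp⟩
  · rintro ⟨n, -, hn⟩
    exact ⟨_, hn⟩

theorem primrecPred_mem_range_comp (f : Code) : PrimrecPred (· ∈ Set.range f.comp) := by
  have hR : PrimrecRel fun n m => f.comp (Denumerable.ofNat Code n) = Denumerable.ofNat Code m :=
    Primrec.eq.comp (primrec₂_comp.comp (.const f) ((Primrec.ofNat Code).comp .fst))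
      ((Primrec.ofNat Code).comp .snd)
  refine (hR.exists_lt.comp Primrec.encode Primrec.encode).of_eq fun c => ?_
  simp only [Denumerable.ofNat_encode, mem_range_comp_iff]

theorem eval_comp_of_eval_eq {f : Code} {r : ℕ → ℕ} (hf : f.eval = (r : ℕ →. ℕ)) (c : Code) :
    (f.comp c).eval = fun x => (c.eval x).map r := by
  funext x
  simp only [eval, hf]
  exact Part.bind_some_eq_map r _

end Nat.Partrec.Code

theorem language_captures_safe_generators (S : Set ℕ) (hS : ComputablePred (· ∈ S))
    (s : ℕ) (hs : s ∈ S) :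
    ∃ L : Set Nat.Partrec.Code, ComputablePred (· ∈ L) ∧
      (∀ c ∈ L, ∀ x y, y ∈ c.eval x → y ∈ S) ∧
      (∀ c : Nat.Partrec.Code, (∀ x y, y ∈ c.eval x → y ∈ S) →
        ∃ c' ∈ L, c'.eval = c.eval) := by
  obtain ⟨r, hr, hr_mem, hr_id⟩ := hS.exists_computable_retraction hs
  obtain ⟨f, hf⟩ := Code.exists_code.1 (Partrec.nat_iff.1 hr.partrec)
  refine ⟨Set.range f.comp, (Code.primrecPred_mem_range_comp f).computablePred, ?_, ?_⟩
  · rintro _ ⟨c, rfl⟩ x y hy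
    rw [Code.eval_comp_of_eval_eq hf] at hy
    obtain ⟨z, -, rfl⟩ := (Part.mem_map_iff r).1 hy
    exact hr_mem z
  · intro c hc
    refine ⟨f.comp c, ⟨c, rfl⟩, ?_⟩
    rw [Code.eval_comp_of_eval_eq hf]
    funext x
    exact Part.map_eq_self_of_forall_mem fun y hy => hr_id y (hc x y hy)
end
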